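/- arXiv:1908.08864 — 2 statements merged into one kernel-verified Lean document; each statement's English description precedes it below -/
import Mathlib

section
/- Let K be a symmetric positive definite real n×n matrix and σ² > 0, and define Q = K + σ⁻² K·K (i.e., Q = K + Kᵀ(σ² I_n)⁻¹ K). Then Q is invertible and σ⁻² Q⁻¹ K = (K + σ² I_n)⁻¹. In particular, with m = n pseudo-inputs equal to the inputs, the sparse GP posterior predictive mean k_*ᵀ Q⁻¹ K (σ² I_n)⁻¹ y reduces to the full GP posterior predictive mean k_*ᵀ (K + σ² I_n)⁻¹ y for every k_*, y ∈ ℝⁿ. -/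
open Matrix

/-!
With `M = K + σ² I` one has the factorization `K + σ⁻² K K = σ⁻² K M`, so `Q` is invertible as
soon as `K` and `M` are, and `(σ⁻² Q⁻¹ K) M = Q⁻¹ (σ⁻² K M) = Q⁻¹ Q = 1` identifies `σ⁻² Q⁻¹ K`
as `M⁻¹`. Positive definiteness of `K` gives both invertibilities.
-/

namespace Matrix

variable {n 𝕜 : Type*} [Fintype n] [DecidableEq n] [Field 𝕜]

theorem add_inv_smul_mul_self_eq (K : Matrix n n 𝕜) {c : 𝕜} (hc : c ≠ 0) :
    K + c⁻¹ • (K * K) = c⁻¹ • (K * (K + c • 1)) := by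
  rw [mul_add, mul_smul_comm, mul_one, smul_add, smul_smul, inv_mul_cancel₀ hc, one_smul,
    add_comm]

theorem isUnit_add_inv_smul_mul_self {K : Matrix n n 𝕜} {c : 𝕜} (hc : c ≠ 0) (hK : IsUnit K)
    (hKc : IsUnit (K + c • 1)) : IsUnit (K + c⁻¹ • (K * K)) := by
  rw [add_inv_smul_mul_self_eq K hc]
  exact (hK.mul hKc).smul (Units.mk0 c⁻¹ (inv_ne_zero hc))

theorem inv_smul_inv_add_inv_smul_mul_self_mul {K : Matrix n n 𝕜} {c : 𝕜} (hc : c ≠ 0)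
    (hQ : IsUnit (K + c⁻¹ • (K * K))) :
    c⁻¹ • ((K + c⁻¹ • (K * K))⁻¹ * K) = (K + c • 1)⁻¹ := by
  refine (inv_eq_left_inv ?_).symm
  rw [smul_mul_assoc, mul_assoc, ← mul_smul_comm, ← add_inv_smul_mul_self_eq K hc,
    nonsing_inv_mul _ ((isUnit_iff_isUnit_det _).mp hQ)]

theorem inv_smul_one {c : 𝕜} (hc : c ≠ 0) : (c • (1 : Matrix n n 𝕜))⁻¹ = c⁻¹ • 1 :=
  inv_eq_right_inv <| by rw [smul_mul_smul_comm, mul_inv_cancel₀ hc, one_mul, one_smul]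

theorem PosDef.isUnit_add_smul_one {K : Matrix n n ℝ} {c : ℝ} (hK : K.PosDef) (hc : 0 < c) :
    IsUnit (K + c • 1) :=
  (hK.add (PosDef.one.smul hc)).isUnit

end Matrix

/-- When the number of pseudo-inputs equals the number of data points (so the
pseudo-inputs are the inputs and the diagonal correction `Λ` vanishes), with
`Q = K + σ⁻² K·K` the matrix `Q` is invertible and `σ⁻² Q⁻¹ K = (K + σ² I_n)⁻¹`; in
particular the sparse GP posterior predictive mean `k_*ᵀ Q⁻¹ K (σ² I_n)⁻¹ y` reduces to
the full GP posterior predictive mean `k_*ᵀ (K + σ² I_n)⁻¹ y`. -/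
theorem sgp_reduces_to_gp_mean (n : ℕ)
    (K : Matrix (Fin n) (Fin n) ℝ) (hK : K.PosDef) (σsq : ℝ) (hσ : 0 < σsq) :
    IsUnit (K + σsq⁻¹ • (K * K)) ∧
    σsq⁻¹ • ((K + σsq⁻¹ • (K * K))⁻¹ * K) =
      (K + σsq • (1 : Matrix (Fin n) (Fin n) ℝ))⁻¹ ∧
    ∀ kstar y : Fin n → ℝ,
      kstar ⬝ᵥ (((K + σsq⁻¹ • (K * K))⁻¹ * K *
          (σsq • (1 : Matrix (Fin n) (Fin n) ℝ))⁻¹) *ᵥ y) =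
        kstar ⬝ᵥ ((K + σsq • (1 : Matrix (Fin n) (Fin n) ℝ))⁻¹ *ᵥ y) := by
  have hQ : IsUnit (K + σsq⁻¹ • (K * K)) :=
    isUnit_add_inv_smul_mul_self hσ.ne' hK.isUnit (hK.isUnit_add_smul_one hσ)
  have hmean := inv_smul_inv_add_inv_smul_mul_self_mul hσ.ne' hQ
  refine ⟨hQ, hmean, fun kstar y => ?_⟩
  rw [inv_smul_one hσ.ne', mul_smul_comm, mul_one, hmean]
end

section
/- Let K be a symmetric positive definite real n×n matrix and σ² > 0, and define Q = K + σ⁻² K·K. Then K⁻¹ − Q⁻¹ = (K + σ² I_n)⁻¹. In particular, with m = n pseudo-inputs equal to the inputs, the sparse GP posterior predictive variance σ² + K_{**} − k_*ᵀ K⁻¹ k_* + k_*ᵀ Q⁻¹ k_* reduces to the full GP posterior predictive variance σ² + K_{**} − k_*ᵀ (K + σ² I_n)⁻¹ k_* for every k_* ∈ ℝⁿ and K_{**} ∈ ℝ. -/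
open Matrix

theorem Matrix.inv_add_inv_smul_mul_self {n 𝕜 : Type*} [Fintype n] [DecidableEq n] [Field 𝕜]
    {K : Matrix n n 𝕜} {s : 𝕜} (hs : s ≠ 0) (hK : IsUnit K) (hA : IsUnit (K + s • 1)) :
    (K + s⁻¹ • (K * K))⁻¹ = K⁻¹ - (K + s • 1)⁻¹ := by
  set A := K + s • (1 : Matrix n n 𝕜)
  rw [isUnit_iff_isUnit_det] at hK hA
  have hQ : K + s⁻¹ • (K * K) = s⁻¹ • (A * K) := by
    rw [add_mul, smul_mul, one_mul, smul_add, smul_smul, inv_mul_cancel₀ hs, one_smul, add_comm]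
  have hKQ : K⁻¹ * (K + s⁻¹ • (K * K)) = 1 + s⁻¹ • K := by
    rw [mul_add, nonsing_inv_mul _ hK, Matrix.mul_smul, ← mul_assoc, nonsing_inv_mul _ hK, one_mul]
  have hAQ : A⁻¹ * (K + s⁻¹ • (K * K)) = s⁻¹ • K := by
    rw [hQ, Matrix.mul_smul, ← mul_assoc, nonsing_inv_mul _ hA, one_mul]
  exact inv_eq_left_inv (by rw [sub_mul, hKQ, hAQ, add_sub_cancel_right])

/-- When the number of pseudo-inputs equals the number of data points, with
`Q = K + σ⁻² K·K` one has `K⁻¹ − Q⁻¹ = (K + σ² I_n)⁻¹`; in particular the sparse GP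
posterior predictive variance `σ² + K_{**} − k_*ᵀ K⁻¹ k_* + k_*ᵀ Q⁻¹ k_*` reduces to the
full GP posterior predictive variance `σ² + K_{**} − k_*ᵀ (K + σ² I_n)⁻¹ k_*`. -/
theorem sgp_reduces_to_gp_variance (n : ℕ)
    (K : Matrix (Fin n) (Fin n) ℝ) (hK : K.PosDef) (σsq : ℝ) (hσ : 0 < σsq) :
    K⁻¹ - (K + σsq⁻¹ • (K * K))⁻¹ =
      (K + σsq • (1 : Matrix (Fin n) (Fin n) ℝ))⁻¹ ∧
    ∀ (kstar : Fin n → ℝ) (Kss : ℝ),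
      σsq + Kss - kstar ⬝ᵥ (K⁻¹ *ᵥ kstar) +
          kstar ⬝ᵥ ((K + σsq⁻¹ • (K * K))⁻¹ *ᵥ kstar) =
        σsq + Kss -
          kstar ⬝ᵥ ((K + σsq • (1 : Matrix (Fin n) (Fin n) ℝ))⁻¹ *ᵥ kstar) := by
  have hA : (K + σsq • (1 : Matrix (Fin n) (Fin n) ℝ)).PosDef :=
    hK.add_posSemidef (PosSemidef.one.smul hσ.le)
  have hinv : K⁻¹ - (K + σsq⁻¹ • (K * K))⁻¹ = (K + σsq • 1)⁻¹ := by
    rw [inv_add_inv_smul_mul_self hσ.ne' hK.isUnit hA.isUnit, sub_sub_cancel]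
  refine ⟨hinv, fun kstar Kss => ?_⟩
  rw [← hinv, sub_mulVec, dotProduct_sub]
  ring
end
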